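/- arXiv:1902.07426 — 2 statements merged into one kernel-verified Lean document; each statement's English description precedes it below -/
import Mathlib

section
/- There is a universal constant C > 0 such that the following holds. Let μ be an arbitrary probability measure on {0,1}^n, let R be a set, let f : {0,1}^n → R, let b ∈ R, let ε ∈ (0,1/2], and let k be an integer with k ≥ C·(1/ε)·log(2/ε). Suppose that at least one of the following two conditions holds, where x and y denote independent samples from μ: (Condition I) Pr_x[ Pr_y[ f(x ∨ y) = b ] ≥ 1 − ε ] > ε/2; (Condition II) Pr_x[ Pr_y[ f(x ∨ y) = b ] ≥ ε ] ≥ 1 − ε/2. Then Pr_{S∼μ^(k)}[ I_S^b(f) > 1 − ε ] > 1 − ε. -/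
open MeasureTheory

/-- Influence of coalition `S` towards value `b`. -/
noncomputable def infl {ι : Type*} {α : Type*} (μ : Measure (ι → Bool))
    (f : (ι → Bool) → α) (S : Finset ι) (b : α) : ℝ :=
  (μ {x | ∃ y, (∀ j ∉ S, y j = x j) ∧ f y = b}).toReal

/-- The boosted measure `μ^(t)`: the distribution of `x¹ ∨ ⋯ ∨ xᵗ` for i.i.d. `xⁱ ∼ μ`. -/
noncomputable def boost {n : ℕ} (μ : Measure (Fin n → Bool)) (t : ℕ) :
    Measure (Fin n → Bool) :=
  (Measure.pi fun _ : Fin t => μ).map (fun xs i => Finset.univ.sup fun j => xs j i)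

/-- The support of `x ∈ {0,1}^n` viewed as a subset of `[n]`. -/
def supp {n : ℕ} (x : Fin n → Bool) : Finset (Fin n) :=
  Finset.univ.filter fun i => x i = true

/-- Coordinatewise OR. -/
def orv {n : ℕ} (x y : Fin n → Bool) : Fin n → Bool := fun i => x i || y i

/-!
Every sample `xᵢ` of `S ∼ μ^(k)` vanishes off `S`, so the influence set of `S` contains
`{y | f (xᵢ ∨ y) = b}`, and once `f (xᵢ ∨ xⱼ) = b` for two samples it contains every sample.

Under Condition II a point `z` with `Pr_y[f (z ∨ y) = b] ≥ ε` escapes the influence set only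
if no sample hits it, which has probability at most `(1 - ε)^k`; Markov's inequality applied to
the missed mass finishes. Under Condition I some sample `xᵢ` has `Pr_y[f (xᵢ ∨ y) = b] ≥ 1 - ε`
except with probability `(1 - ε/2)^k`. For the strict inequality the other samples must neither
all hit nor all miss `{y | f (xᵢ ∨ y) = b}` (up to null atoms): then a missed sample of positive
mass joins the influence set. Both failures have probability at most `(1 - ε)^(k-1)` for each
`i`, and `k ≥ 24 ε⁻¹ log₂(2/ε)` beats the union bound.
-/

open scoped ENNReal

section Numerics

theorem one_sub_pow_le_exp_neg_mul (t : ℝ) {m : ℕ} (ht : t ≤ 1) :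
    (1 - t) ^ m ≤ Real.exp (-(t * m)) := by
  rw [show -(t * m) = m * -t by ring, Real.exp_nat_mul]
  exact pow_le_pow_left₀ (by linarith) (Real.one_sub_le_exp_neg t) m

theorem log_le_logb_two {x : ℝ} (hx : 1 ≤ x) : Real.log x ≤ Real.logb 2 x := by
  rw [Real.logb, le_div_iff₀ (Real.log_pos one_lt_two)]
  exact mul_le_of_le_one_right (Real.log_nonneg hx) (by linarith [Real.log_two_lt_d9])

theorem two_mul_add_one_mul_pow_lt {ε : ℝ} {k : ℕ} (hε : 0 < ε) (hε2 : ε ≤ 1 / 2)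
    (hk : 24 * (1 / ε) * Real.logb 2 (2 / ε) ≤ k) :
    (2 * k + 1) * (1 - ε / 2) ^ (k - 1) < ε / 2 * ε := by
  have h2ε : 1 < 2 / ε := by rw [lt_div_iff₀ hε]; linarith
  have hεk : 24 * Real.log (2 / ε) ≤ ε * k := by
    have := mul_le_mul_of_nonneg_left hk hε.le
    rw [show ε * (24 * (1 / ε) * Real.logb 2 (2 / ε)) = 24 * Real.logb 2 (2 / ε) by
      field_simp] at this
    linarith [log_le_logb_two h2ε.le]
  have hk1 : 1 ≤ k := by
    have : (0 : ℝ) < k := lt_of_lt_of_le (by positivity [Real.logb_pos one_lt_two h2ε]) hk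
    exact_mod_cast this
  set E := Real.exp (ε / 4 * k) with hE
  have hE0 : 0 < E := Real.exp_pos _
  have hkE : (k : ℝ) ≤ 4 / ε * E := by
    simpa [inv_div] using Real.le_inv_mul_exp (k : ℝ) (by positivity : 0 < ε / 4)
  have hEε : (2 / ε) ^ 6 ≤ E := by
    rw [hE, ← Real.exp_log (by positivity : 0 < (2 / ε) ^ 6), Real.log_pow]
    exact Real.exp_le_exp.2 (by push_cast; linarith)
  have hdecay : (1 - ε / 2) ^ (k - 1) * E ^ 2 ≤ 4 / 3 := by
    have hk' : (1 - ε / 2) ^ k * E ^ 2 ≤ 1 := by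
      calc (1 - ε / 2) ^ k * E ^ 2 ≤ Real.exp (-(ε / 2 * k)) * E ^ 2 := by
            gcongr; exact one_sub_pow_le_exp_neg_mul _ (by linarith)
        _ = 1 := by rw [hE, ← Real.exp_nat_mul, ← Real.exp_add]; push_cast; ring_nf; simp
    rw [← Nat.sub_add_cancel hk1, pow_succ] at hk'
    nlinarith [pow_nonneg (by linarith : (0:ℝ) ≤ 1 - ε / 2) (k - 1), sq_nonneg E]
  have hq : 0 ≤ (1 - ε / 2) ^ (k - 1) := pow_nonneg (by linarith) _
  have hk1' : (1 : ℝ) ≤ k := by exact_mod_cast hk1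
  calc (2 * k + 1) * (1 - ε / 2) ^ (k - 1) ≤ 3 * (4 / ε * E) * (1 - ε / 2) ^ (k - 1) := by
        gcongr; linarith
    _ = 12 / ε * ((1 - ε / 2) ^ (k - 1) * E ^ 2) / E := by field_simp; ring
    _ ≤ 16 / ε / (2 / ε) ^ 6 := by
        rw [div_le_div_iff₀ hE0 (by positivity)]
        calc 12 / ε * ((1 - ε / 2) ^ (k - 1) * E ^ 2) * (2 / ε) ^ 6
            ≤ 12 / ε * (4 / 3) * E := by gcongr
          _ = 16 / ε * E := by ring
    _ = ε ^ 5 / 4 := by field_simp; ring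
    _ < ε / 2 * ε := by nlinarith [pow_pos hε 3, pow_le_pow_left₀ hε.le hε2 3]

theorem one_sub_half_pow_add_lt {ε : ℝ} {k : ℕ} (hε : 0 < ε) (hε2 : ε ≤ 1 / 2)
    (hk : 24 * (1 / ε) * Real.logb 2 (2 / ε) ≤ k) :
    (1 - ε / 2) ^ k + 2 * k * (1 - ε) ^ (k - 1) < ε := by
  have h := two_mul_add_one_mul_pow_lt hε hε2 hk
  have h1 : (1 - ε / 2) ^ k ≤ (1 - ε / 2) ^ (k - 1) :=
    pow_le_pow_of_le_one (by linarith) (by linarith) (Nat.sub_le k 1)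
  have h2 : (1 - ε) ^ (k - 1) ≤ (1 - ε / 2) ^ (k - 1) :=
    pow_le_pow_left₀ (by linarith) (by linarith) _
  nlinarith [Nat.cast_nonneg (α := ℝ) k]

theorem one_sub_pow_lt {ε : ℝ} {k : ℕ} (hε : 0 < ε) (hε2 : ε ≤ 1 / 2)
    (hk : 24 * (1 / ε) * Real.logb 2 (2 / ε) ≤ k) : (1 - ε) ^ k < ε / 2 * ε := by
  have h := two_mul_add_one_mul_pow_lt hε hε2 hk
  have h1 : (1 - ε) ^ k ≤ (1 - ε / 2) ^ (k - 1) :=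
    (pow_le_pow_left₀ (by linarith) (by linarith) k).trans
      (pow_le_pow_of_le_one (by linarith) (by linarith) (Nat.sub_le k 1))
  nlinarith [pow_nonneg (by linarith : (0 : ℝ) ≤ 1 - ε / 2) (k - 1), Nat.cast_nonneg (α := ℝ) k]

end Numerics

section IndependentSamples

variable {α ι : Type*} [MeasurableSpace α] {μ : Measure α}

theorem measure_pi_setOf_forall_mem [Fintype ι] [SigmaFinite μ] (B : Set α) :
    Measure.pi (fun _ : ι => μ) {xs | ∀ i, xs i ∈ B} = μ B ^ Fintype.card ι := by
  rw [show {xs : ι → α | ∀ i, xs i ∈ B} = Set.univ.pi fun _ => B by ext; simp, Measure.pi_pi,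
    Finset.prod_const, Finset.card_univ]

theorem measure_pi_setOf_mem_and_forall_ne_le [Fintype ι] [DecidableEq ι] [Finite α]
    [MeasurableSingletonClass α] [IsProbabilityMeasure μ] (i : ι) {A : Set α} {B : α → Set α}
    {c : ℝ≥0∞} (hB : ∀ x ∈ A, μ (B x) ≤ c) :
    Measure.pi (fun _ : ι => μ) {xs | xs i ∈ A ∧ ∀ j ≠ i, xs j ∈ B (xs i)}
      ≤ c ^ (Fintype.card ι - 1) := by
  set box : α → Set (ι → α) := fun x => Set.univ.pi (Function.update (fun _ => B x) i {x})
  have hcover : {xs : ι → α | xs i ∈ A ∧ ∀ j ≠ i, xs j ∈ B (xs i)} ⊆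
      ⋃ x ∈ A.toFinite.toFinset, box x := by
    rintro xs ⟨hxs, hB⟩
    refine Set.mem_biUnion (A.toFinite.mem_toFinset.2 hxs) fun j _ => ?_
    rcases eq_or_ne j i with rfl | hj
    · simp
    · simpa [hj] using hB j hj
  have hbox (x : α) :
      Measure.pi (fun _ : ι => μ) (box x) = μ {x} * μ (B x) ^ (Fintype.card ι - 1) := by
    rw [Measure.pi_pi,
      Finset.prod_congr rfl fun j _ => Function.apply_update (fun _ => μ) _ i {x} j,
      Finset.prod_update_of_mem (Finset.mem_univ i), Finset.prod_const, ← Finset.card_univ,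
      Finset.card_sdiff_of_subset (by simp), Finset.card_singleton]
  calc _ ≤ ∑ x ∈ A.toFinite.toFinset, Measure.pi (fun _ : ι => μ) (box x) :=
        (measure_mono hcover).trans (measure_biUnion_finset_le _ _)
    _ ≤ ∑ x ∈ A.toFinite.toFinset, μ {x} * c ^ (Fintype.card ι - 1) :=
        Finset.sum_le_sum fun x hx =>
          (hbox x).trans_le (by gcongr; exact hB x (A.toFinite.mem_toFinset.1 hx))
    _ ≤ c ^ (Fintype.card ι - 1) := by
        rw [← Finset.sum_mul, sum_measure_singleton]
        exact mul_le_of_le_one_left' prob_le_one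

theorem lintegral_measure_setOf_mem_and_forall_mem_le [Fintype ι] [Countable α]
    [MeasurableSingletonClass α] [IsProbabilityMeasure μ] {A : Set α} {B : α → Set α}
    {c : ℝ≥0∞} (hB : ∀ z ∈ A, μ (B z) ≤ c) :
    ∫⁻ xs, μ {z | z ∈ A ∧ ∀ j, xs j ∈ B z} ∂(Measure.pi fun _ : ι => μ)
      ≤ c ^ Fintype.card ι := by
  set s : Set (α × (ι → α)) := {p | p.1 ∈ A ∧ ∀ j, p.2 j ∈ B p.1}
  have hs : MeasurableSet s := s.to_countable.measurableSet
  calc _ = μ.prod (Measure.pi fun _ : ι => μ) s := (Measure.prod_apply_symm hs).symm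
    _ = ∫⁻ z, Measure.pi (fun _ : ι => μ) {xs | z ∈ A ∧ ∀ j, xs j ∈ B z} ∂μ :=
        Measure.prod_apply hs
    _ ≤ ∫⁻ _, c ^ Fintype.card ι ∂μ := by
        refine lintegral_mono fun z => ?_
        by_cases hz : z ∈ A
        · simp only [hz, true_and]
          rw [measure_pi_setOf_forall_mem]
          gcongr
          exact hB z hz
        · simp [hz]
    _ = c ^ Fintype.card ι := by simp

theorem measure_setOf_measure_singleton_eq_zero [Countable α] [MeasurableSingletonClass α] :
    μ {x | μ {x} = 0} = 0 := by
  conv_lhs => rw [← Set.biUnion_of_singleton {x | μ {x} = 0}]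
  exact (measure_biUnion_null_iff (Set.to_countable _)).2 fun _ hx => hx

end IndependentSamples

section Probability

variable {Ω : Type*} [MeasurableSpace Ω] {μ : Measure Ω} [IsProbabilityMeasure μ] {s : Set Ω}

theorem prob_compl_le_ofReal_one_sub {a : ℝ} (hs : MeasurableSet s) (h : a ≤ μ.real s) :
    μ sᶜ ≤ ENNReal.ofReal (1 - a) := by
  rw [← ofReal_measureReal, probReal_compl_eq_one_sub hs]
  exact ENNReal.ofReal_le_ofReal (by linarith)

theorem one_sub_lt_measureReal_of_prob_compl_lt {ε : ℝ} (hs : MeasurableSet s)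
    (h : μ sᶜ < ENNReal.ofReal ε) : 1 - ε < μ.real s := by
  have := ENNReal.toReal_lt_of_lt_ofReal h
  rw [← measureReal_def, probReal_compl_eq_one_sub hs] at this
  linarith

end Probability

section Coalitions

variable {n k : ℕ} {R : Type*}

def hitSet (f : (Fin n → Bool) → R) (b : R) (x : Fin n → Bool) : Set (Fin n → Bool) :=
  {y | f (orv x y) = b}

def influenceSet (f : (Fin n → Bool) → R) (b : R) (S : Finset (Fin n)) : Set (Fin n → Bool) :=
  {x | ∃ y, (∀ j ∉ S, y j = x j) ∧ f y = b}

noncomputable def bigOr (xs : Fin k → Fin n → Bool) : Fin n → Bool :=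
  fun i => Finset.univ.sup fun j => xs j i

theorem boost_apply (μ : Measure (Fin n → Bool)) (s : Set (Fin n → Bool)) :
    boost μ k s = Measure.pi (fun _ : Fin k => μ) (bigOr ⁻¹' s) :=
  Measure.map_apply (measurable_of_countable _) s.toFinite.measurableSet

theorem orv_comm (x y : Fin n → Bool) : orv x y = orv y x :=
  funext fun _ => Bool.or_comm _ _

theorem mem_hitSet_comm {f : (Fin n → Bool) → R} {b : R} {x y : Fin n → Bool} :
    y ∈ hitSet f b x ↔ x ∈ hitSet f b y := by
  show f (orv x y) = b ↔ f (orv y x) = b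
  rw [orv_comm]

theorem eq_false_of_not_mem_supp_bigOr {xs : Fin k → Fin n → Bool} {j : Fin n}
    (hj : j ∉ supp (bigOr xs)) (l : Fin k) : xs l j = false := by
  have : bigOr xs j = false := by simpa [supp] using hj
  exact (Finset.sup_eq_bot_iff _ _).1 this l (Finset.mem_univ l)

variable {f : (Fin n → Bool) → R} {b : R} {S : Finset (Fin n)} {x y z : Fin n → Bool}

theorem hitSet_subset_influenceSet (hx : ∀ j ∉ S, x j = false) :
    hitSet f b x ⊆ influenceSet f b S :=
  fun z hz => ⟨orv x z, fun j hj => by simp [orv, hx j hj], hz⟩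

theorem mem_influenceSet_of_mem_hitSet (hx : ∀ j ∉ S, x j = false) (hy : ∀ j ∉ S, y j = false)
    (hz : ∀ j ∉ S, z j = false) (hxy : y ∈ hitSet f b x) : z ∈ influenceSet f b S :=
  ⟨orv x y, fun j hj => by simp [orv, hx j hj, hy j hj, hz j hj], hxy⟩

theorem measureReal_hitSet_lt_influenceSet {μ : Measure (Fin n → Bool)} [IsFiniteMeasure μ]
    (hx : ∀ j ∉ S, x j = false) (hy : ∀ j ∉ S, y j = false) (hz : ∀ j ∉ S, z j = false)
    (hxy : y ∈ hitSet f b x) (hxz : z ∉ hitSet f b x) (hz0 : μ {z} ≠ 0) :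
    μ.real (hitSet f b x) < μ.real (influenceSet f b S) :=
  calc μ.real (hitSet f b x) < μ.real (hitSet f b x) + μ.real {z} :=
        lt_add_of_pos_right _ (ENNReal.toReal_pos hz0 (measure_ne_top _ _))
    _ = μ.real (hitSet f b x ∪ {z}) :=
        (measureReal_union (Set.disjoint_singleton_right.2 hxz) (measurableSet_singleton z)).symm
    _ ≤ μ.real (influenceSet f b S) :=
        measureReal_mono (Set.union_subset (hitSet_subset_influenceSet hx)
          (Set.singleton_subset_iff.2 (mem_influenceSet_of_mem_hitSet hx hy hz hxy)))

end Coalitions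

section SingleRound

variable {n k : ℕ} {R : Type*} {μ : Measure (Fin n → Bool)} [IsProbabilityMeasure μ]
  {f : (Fin n → Bool) → R} {b : R} {ε : ℝ}

theorem measure_pi_influence_le_lt_of_condII (hε : 0 < ε) (hε1 : ε ≤ 1)
    (hII : 1 - ε / 2 ≤ μ.real {x | ε ≤ μ.real (hitSet f b x)}) (hk : (1 - ε) ^ k < ε / 2 * ε) :
    Measure.pi (fun _ : Fin k => μ) {xs | μ.real (influenceSet f b (supp (bigOr xs))) ≤ 1 - ε}
      < ENNReal.ofReal ε := by
  set π := Measure.pi fun _ : Fin k => μ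
  set A := {x | ε ≤ μ.real (hitSet f b x)}
  set Y : (Fin k → Fin n → Bool) → Set (Fin n → Bool) :=
    fun xs => {z | z ∈ A ∧ ∀ j, xs j ∈ (hitSet f b z)ᶜ}
  have hA : μ Aᶜ ≤ ENNReal.ofReal (ε / 2) := by
    simpa using prob_compl_le_ofReal_one_sub A.toFinite.measurableSet hII
  have hY : ∫⁻ xs, μ (Y xs) ∂π ≤ ENNReal.ofReal (1 - ε) ^ k := by
    have := lintegral_measure_setOf_mem_and_forall_mem_le (ι := Fin k) (μ := μ) (A := A)
      fun z hz => prob_compl_le_ofReal_one_sub (Set.toFinite (hitSet f b z)).measurableSet hz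
    rwa [Fintype.card_fin] at this
  have hbad : {xs | μ.real (influenceSet f b (supp (bigOr xs))) ≤ 1 - ε} ⊆
      {xs | ENNReal.ofReal (ε / 2) ≤ μ (Y xs)} := by
    intro xs hxs
    show ENNReal.ofReal (ε / 2) ≤ μ (Y xs)
    by_contra! hsmall
    refine not_lt.2 hxs (one_sub_lt_measureReal_of_prob_compl_lt (Set.toFinite _).measurableSet ?_)
    have hcover : (influenceSet f b (supp (bigOr xs)))ᶜ ⊆ Aᶜ ∪ Y xs := by
      intro z hz
      by_cases hzA : z ∈ A
      · refine Or.inr ⟨hzA, fun j hj => hz ?_⟩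
        exact hitSet_subset_influenceSet (fun i hi => eq_false_of_not_mem_supp_bigOr hi j)
          (mem_hitSet_comm.1 hj)
      · exact Or.inl hzA
    calc _ ≤ μ Aᶜ + μ (Y xs) := (measure_mono hcover).trans (measure_union_le _ _)
      _ < ENNReal.ofReal (ε / 2) + ENNReal.ofReal (ε / 2) :=
          ENNReal.add_lt_add_of_le_of_lt (measure_ne_top _ _) hA hsmall
      _ = ENNReal.ofReal ε := by rw [← ENNReal.ofReal_add (by positivity) (by positivity)]; ring_nf
  have hmarkov := mul_meas_ge_le_lintegral₀
    (measurable_of_countable (fun xs => μ (Y xs))).aemeasurable (μ := π) (ENNReal.ofReal (ε / 2))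
  rw [← ENNReal.mul_lt_mul_iff_right (a := ENNReal.ofReal (ε / 2)) (by simpa using hε)
    ENNReal.ofReal_ne_top]
  calc _ ≤ ENNReal.ofReal (ε / 2) * π {xs | ENNReal.ofReal (ε / 2) ≤ μ (Y xs)} := by
        gcongr
    _ ≤ ENNReal.ofReal (1 - ε) ^ k := hmarkov.trans hY
    _ < ENNReal.ofReal (ε / 2) * ENNReal.ofReal ε := by
        rw [← ENNReal.ofReal_pow (by linarith), ← ENNReal.ofReal_mul (by positivity)]
        exact (ENNReal.ofReal_lt_ofReal_iff (by positivity)).2 hk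

theorem setOf_influenceSet_le_subset :
    {xs : Fin k → Fin n → Bool | μ.real (influenceSet f b (supp (bigOr xs))) ≤ 1 - ε} ⊆
      {xs | ∀ i, xs i ∉ {x | 1 - ε ≤ μ.real (hitSet f b x)}} ∪
        (⋃ i, {xs | μ.real (hitSet f b (xs i)) = 1 - ε ∧
          ∀ j ≠ i, xs j ∈ hitSet f b (xs i) ∪ {x | μ {x} = 0}}) ∪
        ⋃ i, {xs | μ.real (hitSet f b (xs i)) = 1 - ε ∧ ∀ j ≠ i, xs j ∉ hitSet f b (xs i)} := by
  intro xs (hxs : μ.real _ ≤ 1 - ε)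
  by_cases hnone : ∀ i, xs i ∉ {x | 1 - ε ≤ μ.real (hitSet f b x)}
  · exact Or.inl (Or.inl hnone)
  obtain ⟨i, hi : 1 - ε ≤ μ.real (hitSet f b (xs i))⟩ := not_forall_not.1 hnone
  have hS (l : Fin k) : ∀ j ∉ supp (bigOr xs), xs l j = false :=
    fun _ hj => eq_false_of_not_mem_supp_bigOr hj l
  have hWD : μ.real (hitSet f b (xs i)) ≤ μ.real (influenceSet f b (supp (bigOr xs))) :=
    measureReal_mono (hitSet_subset_influenceSet (hS i))
  have hi' : μ.real (hitSet f b (xs i)) = 1 - ε := le_antisymm (hWD.trans hxs) hi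
  by_cases hall : ∀ j ≠ i, xs j ∈ hitSet f b (xs i) ∪ {x | μ {x} = 0}
  · exact Or.inl (Or.inr (Set.mem_iUnion.2 ⟨i, hi', hall⟩))
  refine Or.inr (Set.mem_iUnion.2 ⟨i, hi', fun l _ hl => ?_⟩)
  obtain ⟨j, -, hj⟩ := not_forall₂.1 hall
  have := measureReal_hitSet_lt_influenceSet (μ := μ) (hS i) (hS l) (hS j) hl
    (fun h => hj (Or.inl h)) (fun h => hj (Or.inr h))
  linarith

theorem measure_pi_influence_le_lt_of_condI (hε : 0 < ε) (hε2 : ε ≤ 1 / 2)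
    (hI : ε / 2 < μ.real {x | 1 - ε ≤ μ.real (hitSet f b x)})
    (hk : (1 - ε / 2) ^ k + 2 * k * (1 - ε) ^ (k - 1) < ε) :
    Measure.pi (fun _ : Fin k => μ) {xs | μ.real (influenceSet f b (supp (bigOr xs))) ≤ 1 - ε}
      < ENNReal.ofReal ε := by
  set π := Measure.pi fun _ : Fin k => μ
  set A := {x | 1 - ε ≤ μ.real (hitSet f b x)}
  set c := ENNReal.ofReal (1 - ε)
  have h0 : π {xs | ∀ i, xs i ∉ A} ≤ ENNReal.ofReal (1 - ε / 2) ^ k := by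
    have hA : μ Aᶜ ≤ ENNReal.ofReal (1 - ε / 2) :=
      prob_compl_le_ofReal_one_sub A.toFinite.measurableSet hI.le
    calc _ = μ Aᶜ ^ k := by simpa using measure_pi_setOf_forall_mem (ι := Fin k) (μ := μ) Aᶜ
      _ ≤ _ := by gcongr
  have h1 (i : Fin k) : π {xs | μ.real (hitSet f b (xs i)) = 1 - ε ∧
      ∀ j ≠ i, xs j ∈ hitSet f b (xs i) ∪ {x | μ {x} = 0}} ≤ c ^ (k - 1) := by
    have := measure_pi_setOf_mem_and_forall_ne_le (μ := μ)
      (A := {x | μ.real (hitSet f b x) = 1 - ε})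
      (B := fun x => hitSet f b x ∪ {x | μ {x} = 0}) i fun x (hx : _ = _) =>
      calc μ (hitSet f b x ∪ {x | μ {x} = 0}) ≤ μ (hitSet f b x) + μ {x | μ {x} = 0} :=
            measure_union_le _ _
        _ = c := by rw [measure_setOf_measure_singleton_eq_zero, add_zero, ← ofReal_measureReal, hx]
    rwa [Fintype.card_fin] at this
  have h2 (i : Fin k) : π {xs | μ.real (hitSet f b (xs i)) = 1 - ε ∧
      ∀ j ≠ i, xs j ∉ hitSet f b (xs i)} ≤ c ^ (k - 1) := by
    have := measure_pi_setOf_mem_and_forall_ne_le (μ := μ)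
      (A := {x | μ.real (hitSet f b x) = 1 - ε})
      (B := fun x => (hitSet f b x)ᶜ) (c := c) i fun x (hx : _ = _) =>
      (prob_compl_le_ofReal_one_sub (Set.toFinite _).measurableSet hx.ge).trans
        (ENNReal.ofReal_le_ofReal (by linarith))
    rwa [Fintype.card_fin] at this
  calc _ ≤ ENNReal.ofReal (1 - ε / 2) ^ k + ∑ _i : Fin k, c ^ (k - 1) +
        ∑ _i : Fin k, c ^ (k - 1) :=
        (measure_mono setOf_influenceSet_le_subset).trans <| (measure_union_le _ _).trans <|
          add_le_add ((measure_union_le _ _).trans (add_le_add h0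
            ((measure_iUnion_fintype_le _ _).trans (Finset.sum_le_sum fun i _ => h1 i))))
          ((measure_iUnion_fintype_le _ _).trans (Finset.sum_le_sum fun i _ => h2 i))
    _ = ENNReal.ofReal ((1 - ε / 2) ^ k + 2 * k * (1 - ε) ^ (k - 1)) := by
        have hε1 : 0 ≤ 1 - ε := by linarith
        rw [ENNReal.ofReal_add (pow_nonneg (by linarith) _) (by positivity),
          ENNReal.ofReal_mul (by positivity), ENNReal.ofReal_pow (by linarith),
          ENNReal.ofReal_pow hε1]
        simp [c]
        ring
    _ < ENNReal.ofReal ε := (ENNReal.ofReal_lt_ofReal_iff hε).2 hk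

end SingleRound

/-- Key Lemma for Single Round: if Condition I or Condition II holds for `b`,
then a random coalition `S ∼ μ^(k)` biases `f` towards `b` with probability `> 1 - ε`. -/
theorem key_lemma_single_round :
    ∃ C : ℝ, C > 0 ∧
      ∀ n : ℕ, ∀ μ : Measure (Fin n → Bool), IsProbabilityMeasure μ →
      ∀ (R : Type) (f : (Fin n → Bool) → R) (b : R),
      ∀ ε : ℝ, 0 < ε → ε ≤ 1/2 →
      ∀ k : ℕ, (k : ℝ) ≥ C * (1/ε) * Real.logb 2 (2/ε) →
      -- Condition I
      ((μ {x | (μ {y | f (orv x y) = b}).toReal ≥ 1 - ε}).toReal > ε/2 ∨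
      -- Condition II
       (μ {x | (μ {y | f (orv x y) = b}).toReal ≥ ε}).toReal ≥ 1 - ε/2) →
      ((boost μ k) {x | infl μ f (supp x) b > 1 - ε}).toReal > 1 - ε := by
  refine ⟨24, by norm_num, fun n μ _ R f b ε hε hε2 k hk hcond => ?_⟩
  rw [boost_apply]
  refine one_sub_lt_measureReal_of_prob_compl_lt (Set.toFinite _).measurableSet ?_
  rw [show (bigOr ⁻¹' {x | infl μ f (supp x) b > 1 - ε})ᶜ =
      {xs : Fin k → Fin n → Bool | μ.real (influenceSet f b (supp (bigOr xs))) ≤ 1 - ε} from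
    Set.ext fun _ => not_lt (α := ℝ)]
  rcases hcond with hI | hII
  · exact measure_pi_influence_le_lt_of_condI hε hε2 hI (one_sub_half_pow_add_lt hε hε2 hk)
  · exact measure_pi_influence_le_lt_of_condII hε (by linarith) hII (one_sub_pow_lt hε hε2 hk)
end

section
/- There is a universal constant C > 0 such that the following holds. Let μ be an arbitrary probability measure on {0,1}^n, let f : {0,1}^n → {0,1}, let t ≥ 1 be an integer, let ε ∈ (0,1/2], and let k be an integer with k ≥ C·(t/ε)·log(2t/ε). Then there exists b ∈ {0,1} such that Pr_{S∼μ^(k)}[ for all ℓ ≤ t, I_S^{b,ℓ}(f) ≥ 1 − ε ] ≥ 1 − ε. -/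
open MeasureTheory

/-- The boosted influence `I_S^{b,t}(f)` of coalition `S` towards `b`,
measured with respect to `μ^(t)`. -/
noncomputable def inflB {n : ℕ} {α : Type*} (μ : Measure (Fin n → Bool))
    (f : (Fin n → Bool) → α) (S : Finset (Fin n)) (b : α) (t : ℕ) : ℝ :=
  infl (boost μ t) f S b

/-!
Say that `x` is forced to `c` by a coalition `z` if `f ≡ c` on the subcube through `x` that is
free on `supp z`. Then `I^{b,ℓ}_{supp z}(f) = 1 - μ^(ℓ)(x is forced to ¬b by z)`, and the set
`Q_c(ℓ)` of coalitions `z` for which this probability is at least `ε` is down-closed.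

Draw `x₁, …, x_r ∼ μ^(ℓ₁)` and `w₁, …, w_r ∼ μ^(ℓ₂)` independently, `r ≈ 4/ε`. Some `xᵢ` forced
to `true` by `⨆ w` and some `wⱼ` forced to `false` by `⨆ x` cannot coexist: `xᵢ ⊔ wⱼ` lies in
both subcubes. As `⨆ w ∼ μ^(rℓ₂)`, the first event has probability at least
`(1 - (1 - ε)^r) · μ^(rℓ₂)(Q_true(ℓ₁))`, and symmetrically for the second, so these two measures
cannot both exceed `3/4`. Down-closed sets lose measure as the boosting parameter grows, which
yields one `b` with `μ^(rt)(Q_{¬b}(ℓ)) ≤ 3/4` for all `ℓ ≤ t`.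

Finally `μ^(jm)(A) ≤ μ^(m)(A)^j` for down-closed `A`, since a join of `j` samples lies in `A` only
if each sample does. With `j ≈ 4 log(2t/ε)` and `k ≥ jrt`, each `Q_{¬b}(ℓ)` has
`μ^(k)`-probability at most `ε/2t`, and a union bound over `ℓ ≤ t` concludes.
-/

open scoped ENNReal

theorem map_uncurry_pi_pi {Y : Type*} [MeasurableSpace Y] (ν : Measure Y) [SigmaFinite ν]
    (κ κ' : Type*) [Fintype κ] [Fintype κ'] :
    (Measure.pi fun _ : κ' => Measure.pi fun _ : κ => ν).map Function.uncurry =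
      Measure.pi fun _ : κ' × κ => ν := by
  refine (Measure.pi_eq fun s hs => ?_).symm
  have hpre : Function.uncurry ⁻¹' Set.univ.pi s =
      Set.univ.pi fun i => Set.univ.pi fun j => s (i, j) := by
    ext g; simp [Set.mem_pi]
  rw [Measure.map_apply measurable_uncurry (MeasurableSet.univ_pi hs), hpre, Measure.pi_pi,
    Fintype.prod_prod_type]
  simp only [Measure.pi_pi]

section IidSup

variable {X : Type*} [CompleteLattice X] [MeasurableSpace X] [Countable X]
  [MeasurableSingletonClass X]

noncomputable def iidSup (ν : Measure X) (κ : Type*) [Fintype κ] : Measure X :=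
  (Measure.pi fun _ : κ => ν).map fun xs => ⨆ i, xs i

variable (ν : Measure X) (κ κ' : Type*) [Fintype κ] [Fintype κ']

instance [IsProbabilityMeasure ν] : IsProbabilityMeasure (iidSup ν κ) :=
  Measure.isProbabilityMeasure_map Measurable.of_discrete.aemeasurable

variable {κ κ'} in
theorem iidSup_congr [SigmaFinite ν] (e : κ ≃ κ') : iidSup ν κ = iidSup ν κ' := by
  rw [iidSup, iidSup, ← (measurePreserving_piCongrLeft (fun _ => ν) e).map_eq,
    Measure.map_map .of_discrete .of_discrete]
  congr 1
  funext xs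
  simp only [Function.comp_apply, ← e.iSup_comp, MeasurableEquiv.coe_piCongrLeft,
    Equiv.piCongrLeft_apply_apply]

theorem iidSup_sum [IsFiniteMeasure ν] :
    iidSup ν (κ ⊕ κ') = ((iidSup ν κ).prod (iidSup ν κ')).map fun p => p.1 ⊔ p.2 := by
  rw [iidSup, iidSup, iidSup, Measure.map_prod_map _ _ .of_discrete .of_discrete,
    Measure.map_map .of_discrete .of_discrete,
    ← (measurePreserving_sumPiEquivProdPi_symm fun _ => ν).map_eq,
    Measure.map_map .of_discrete .of_discrete]
  congr 1
  funext p
  simp only [Function.comp_apply, iSup_sum]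
  rfl

theorem iidSup_iidSup [IsFiniteMeasure ν] :
    iidSup (iidSup ν κ) κ' = iidSup ν (κ' × κ) := by
  rw [iidSup, iidSup, iidSup, ← Measure.pi_map_pi fun _ => Measurable.of_discrete.aemeasurable,
    ← map_uncurry_pi_pi ν κ κ', Measure.map_map .of_discrete .of_discrete,
    Measure.map_map .of_discrete measurable_uncurry]
  congr 1
  funext xs
  simp [iSup_prod]

variable {ν κ}

theorem iidSup_sum_le_of_isLowerSet [IsProbabilityMeasure ν] {A : Set X} (hA : IsLowerSet A) :
    iidSup ν (κ ⊕ κ') A ≤ iidSup ν κ A := by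
  rw [iidSup_sum, Measure.map_apply .of_discrete .of_discrete]
  calc ((iidSup ν κ).prod (iidSup ν κ')) ((fun p => p.1 ⊔ p.2) ⁻¹' A)
      ≤ ((iidSup ν κ).prod (iidSup ν κ')) (A ×ˢ Set.univ) :=
        measure_mono fun p hp => ⟨hA le_sup_left hp, trivial⟩
    _ = iidSup ν κ A := by rw [Measure.prod_prod, measure_univ, mul_one]

theorem iidSup_le_pow_of_isLowerSet [SigmaFinite ν] {A : Set X} (hA : IsLowerSet A) :
    iidSup ν κ A ≤ ν A ^ Fintype.card κ := by
  rw [iidSup, Measure.map_apply .of_discrete .of_discrete]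
  calc (Measure.pi fun _ : κ => ν) ((fun xs => ⨆ i, xs i) ⁻¹' A)
      ≤ Measure.pi (fun _ : κ => ν) (Set.univ.pi fun _ => A) :=
        measure_mono fun xs hxs i _ => hA (le_iSup xs i) hxs
    _ = ν A ^ Fintype.card κ := by simp

end IidSup

section Boost

variable {n : ℕ} (μ : Measure (Fin n → Bool))

theorem boost_eq_iidSup (t : ℕ) : boost μ t = iidSup μ (Fin t) := by
  rw [boost, iidSup]
  congr 1
  funext xs i
  simp [Finset.sup_univ_eq_iSup, iSup_apply]

variable [IsProbabilityMeasure μ]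

instance (t : ℕ) : IsProbabilityMeasure (boost μ t) := by
  rw [boost_eq_iidSup]
  infer_instance

theorem iidSup_boost (ℓ r : ℕ) : iidSup (boost μ ℓ) (Fin r) = boost μ (r * ℓ) := by
  rw [boost_eq_iidSup, boost_eq_iidSup, iidSup_iidSup, iidSup_congr μ finProdFinEquiv]

variable {μ} {A : Set (Fin n → Bool)}

theorem boost_antitone_of_isLowerSet (hA : IsLowerSet A) : Antitone fun t => boost μ t A := by
  intro a m h
  obtain ⟨d, rfl⟩ := Nat.exists_eq_add_of_le h
  simp only [boost_eq_iidSup, iidSup_congr μ finSumFinEquiv.symm]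
  exact iidSup_sum_le_of_isLowerSet _ hA

theorem measureReal_boost_le_pow_of_isLowerSet (hA : IsLowerSet A) {j m k : ℕ} (h : j * m ≤ k) :
    (boost μ k).real A ≤ (boost μ m).real A ^ j := by
  rw [measureReal_def, measureReal_def, ← ENNReal.toReal_pow]
  refine ENNReal.toReal_mono (by finiteness) ?_
  calc boost μ k A ≤ boost μ (j * m) A := boost_antitone_of_isLowerSet hA h
    _ = iidSup (boost μ m) (Fin j) A := by rw [iidSup_boost]
    _ ≤ boost μ m A ^ j := by
      simpa using iidSup_le_pow_of_isLowerSet (ν := boost μ m) (κ := Fin j) hA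

end Boost

section Subcube

variable {ι α : Type*}

/-- `subcube z x` is the subcube `B_{supp z}(x)`. -/
def subcube (z x : ι → Bool) : Set (ι → Bool) :=
  {y | ∀ j, z j = false → y j = x j}

def forcedSet (f : (ι → Bool) → α) (c : α) (z : ι → Bool) : Set (ι → Bool) :=
  {x | ∀ y ∈ subcube z x, f y = c}

theorem sup_mem_subcube {z x x' : ι → Bool} (h : x' ≤ z) : x ⊔ x' ∈ subcube z x := by
  intro j hj
  have hx' : x' j = false := Bool.eq_false_of_le_false (hj ▸ h j)
  simp [hx']

theorem forcedSet_antitone (f : (ι → Bool) → α) (c : α) : Antitone (forcedSet f c) := by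
  intro z z' h x hx y hy
  exact hx y fun j hj => hy j (Bool.eq_false_of_le_false (hj ▸ h j))

theorem eq_of_mem_forcedSet {f : (ι → Bool) → α} {c c' : α} {z z' x x' : ι → Bool}
    (hx : x ∈ forcedSet f c z) (hx' : x' ∈ forcedSet f c' z') (hxz : x ≤ z') (hxz' : x' ≤ z) :
    c = c' :=
  (hx _ (sup_mem_subcube hxz')).symm.trans (sup_comm x' x ▸ hx' _ (sup_mem_subcube hxz))

theorem isLowerSet_setOf_le_measure_forcedSet (ν : Measure (ι → Bool)) (f : (ι → Bool) → α)
    (c : α) (e : ℝ≥0∞) : IsLowerSet {z | e ≤ ν (forcedSet f c z)} :=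
  fun _ _ h hz => hz.trans (measure_mono (forcedSet_antitone f c h))

theorem infl_supp_eq_one_sub {n : ℕ} (ν : Measure (Fin n → Bool)) [IsProbabilityMeasure ν]
    (f : (Fin n → Bool) → Bool) (z : Fin n → Bool) (b : Bool) :
    infl ν f (supp z) b = 1 - ν.real (forcedSet f (!b) z) := by
  have hcompl : {x | ∃ y, (∀ j ∉ supp z, y j = x j) ∧ f y = b} = (forcedSet f (!b) z)ᶜ := by
    ext x
    simp [forcedSet, subcube, supp]
  rw [infl, hcompl, ← measureReal_def, probReal_compl_eq_one_sub .of_discrete]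

end Subcube

section Sampling

theorem one_sub_pow_le_pi_exists_mem {X : Type*} [MeasurableSpace X] {ν : Measure X}
    [IsProbabilityMeasure ν] {A : Set X} (hA : MeasurableSet A) {e : ℝ≥0∞} (he : e ≤ ν A)
    (κ : Type*) [Fintype κ] :
    1 - (1 - e) ^ Fintype.card κ ≤ Measure.pi (fun _ : κ => ν) {xs | ∃ i, xs i ∈ A} := by
  have hcompl : {xs : κ → X | ∃ i, xs i ∈ A} = (Set.univ.pi fun _ => Aᶜ)ᶜ := by
    ext xs
    simp [Set.mem_pi]
  rw [hcompl, prob_compl_eq_one_sub (MeasurableSet.univ_pi fun _ => hA.compl), Measure.pi_pi,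
    prob_compl_eq_one_sub hA, Finset.prod_const, Finset.card_univ]
  gcongr

variable {X Y : Type*} [MeasurableSpace X] [Countable X] [MeasurableSingletonClass X]
  [MeasurableSpace Y] [Countable Y] [MeasurableSingletonClass Y]

theorem one_sub_pow_mul_le_prod_exists_mem (ν : Measure X) [IsProbabilityMeasure ν]
    (ρ : Measure Y) [SFinite ρ] (A : Y → Set X) (e : ℝ≥0∞) (κ : Type*) [Fintype κ] :
    (1 - (1 - e) ^ Fintype.card κ) * ρ {y | e ≤ ν (A y)} ≤
      ((Measure.pi fun _ : κ => ν).prod ρ) {p | ∃ i, p.1 i ∈ A p.2} := by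
  rw [Measure.prod_apply_symm .of_discrete]
  refine le_trans ?_ (mul_meas_ge_le_lintegral .of_discrete (1 - (1 - e) ^ Fintype.card κ))
  exact mul_le_mul_right
    (measure_mono fun y hy => one_sub_pow_le_pi_exists_mem .of_discrete hy κ) _

end Sampling

theorem one_sub_pow_mul_iidSup_add_le_one {ι α : Type*} [Finite ι] (ν₁ ν₂ : Measure (ι → Bool))
    [IsProbabilityMeasure ν₁] [IsProbabilityMeasure ν₂] (f : (ι → Bool) → α) {c c' : α}
    (hc : c ≠ c') (e : ℝ≥0∞) (κ : Type*) [Fintype κ] :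
    (1 - (1 - e) ^ Fintype.card κ) * (iidSup ν₂ κ {z | e ≤ ν₁ (forcedSet f c z)} +
      iidSup ν₁ κ {z | e ≤ ν₂ (forcedSet f c' z)}) ≤ 1 := by
  set P := (Measure.pi fun _ : κ => ν₁).prod (Measure.pi fun _ : κ => ν₂)
  set E := {p : (κ → ι → Bool) × (κ → ι → Bool) | ∃ i, p.1 i ∈ forcedSet f c (⨆ j, p.2 j)}
  set F := {p : (κ → ι → Bool) × (κ → ι → Bool) | ∃ j, p.2 j ∈ forcedSet f c' (⨆ i, p.1 i)}
  have hE :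
      (1 - (1 - e) ^ Fintype.card κ) * iidSup ν₂ κ {z | e ≤ ν₁ (forcedSet f c z)} ≤ P E := by
    have := one_sub_pow_mul_le_prod_exists_mem ν₁ (Measure.pi fun _ : κ => ν₂)
      (fun ws => forcedSet f c (⨆ j, ws j)) e κ
    rw [iidSup, Measure.map_apply .of_discrete .of_discrete]
    exact this
  have hF :
      (1 - (1 - e) ^ Fintype.card κ) * iidSup ν₁ κ {z | e ≤ ν₂ (forcedSet f c' z)} ≤ P F := by
    have := one_sub_pow_mul_le_prod_exists_mem ν₂ (Measure.pi fun _ : κ => ν₁)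
      (fun xs => forcedSet f c' (⨆ i, xs i)) e κ
    rw [← Measure.prod_swap, Measure.map_apply measurable_swap .of_discrete] at this
    rw [iidSup, Measure.map_apply .of_discrete .of_discrete]
    exact this
  have hdisj : Disjoint E F := Set.disjoint_left.2 fun p ⟨i, hi⟩ ⟨j, hj⟩ =>
    hc (eq_of_mem_forcedSet hi hj (le_iSup p.1 i) (le_iSup p.2 j))
  calc _ ≤ P E + P F := by rw [mul_add]; exact add_le_add hE hF
    _ = P (E ∪ F) := (measure_union hdisj .of_discrete).symm
    _ ≤ 1 := prob_le_one

theorem exists_forall_boost_setOf_le {n : ℕ} (μ : Measure (Fin n → Bool))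
    [IsProbabilityMeasure μ] (f : (Fin n → Bool) → Bool) {e : ℝ≥0∞} {r : ℕ}
    (hr : ENNReal.ofReal (4 / 5) ≤ 1 - (1 - e) ^ r) (t : ℕ) :
    ∃ b : Bool, ∀ ℓ ≤ t,
      boost μ (r * t) {z | e ≤ boost μ ℓ (forcedSet f (!b) z)} ≤ ENNReal.ofReal (3 / 4) := by
  by_contra! h
  obtain ⟨ℓ₁, hℓ₁, h₁⟩ := h false
  obtain ⟨ℓ₂, hℓ₂, h₂⟩ := h true
  have h₁' := h₁.trans_le <| boost_antitone_of_isLowerSet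
    (isLowerSet_setOf_le_measure_forcedSet _ f _ e) (Nat.mul_le_mul_left r hℓ₂)
  have h₂' := h₂.trans_le <| boost_antitone_of_isLowerSet
    (isLowerSet_setOf_le_measure_forcedSet _ f _ e) (Nat.mul_le_mul_left r hℓ₁)
  have key := one_sub_pow_mul_iidSup_add_le_one (boost μ ℓ₁) (boost μ ℓ₂) f
    (by decide : true ≠ false) e (Fin r)
  rw [Fintype.card_fin, iidSup_boost, iidSup_boost] at key
  have : ENNReal.ofReal (4 / 5) * (ENNReal.ofReal (3 / 4) + ENNReal.ofReal (3 / 4)) ≤ 1 :=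
    le_trans (mul_le_mul' hr (add_le_add h₁'.le h₂'.le)) key
  rw [← ENNReal.ofReal_add (by norm_num) (by norm_num), ← ENNReal.ofReal_mul (by norm_num),
    ENNReal.ofReal_le_one] at this
  norm_num at this

theorem ofReal_four_fifths_le_one_sub_pow_ceil {ε : ℝ} (hε : 0 < ε) (hε1 : ε ≤ 1) :
    ENNReal.ofReal (4 / 5) ≤ 1 - (1 - ENNReal.ofReal ε) ^ ⌈4 / ε⌉₊ := by
  set r := ⌈4 / ε⌉₊
  have hεr : 4 ≤ ε * r := by
    have := Nat.le_ceil (4 / ε)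
    rw [div_le_iff₀ hε] at this
    linarith
  have hpow : (1 - ε) ^ r ≤ 1 / 5 :=
    calc (1 - ε) ^ r ≤ Real.exp (-ε) ^ r :=
          pow_le_pow_left₀ (by linarith) (Real.one_sub_le_exp_neg ε) r
      _ = (Real.exp (ε * r))⁻¹ := by rw [← Real.exp_nat_mul, ← Real.exp_neg]; ring_nf
      _ ≤ (Real.exp 4)⁻¹ := inv_anti₀ (Real.exp_pos 4) (Real.exp_le_exp.2 hεr)
      _ ≤ 1 / 5 := by
          rw [one_div]
          exact inv_anti₀ (by norm_num) (by linarith [Real.add_one_le_exp 4])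
  rw [← ENNReal.ofReal_one, ← ENNReal.ofReal_sub _ hε.le, ← ENNReal.ofReal_pow (by linarith),
    ← ENNReal.ofReal_sub _ (by positivity)]
  exact ENNReal.ofReal_le_ofReal (by linarith)

theorem three_quarters_pow_le_inv {x : ℝ} (hx : 0 < x) :
    (3 / 4 : ℝ) ^ (4 * ⌈Real.logb 2 x⌉₊) ≤ x⁻¹ :=
  calc (3 / 4 : ℝ) ^ (4 * ⌈Real.logb 2 x⌉₊) = ((3 / 4) ^ 4) ^ ⌈Real.logb 2 x⌉₊ := pow_mul _ _ _
    _ ≤ 2⁻¹ ^ ⌈Real.logb 2 x⌉₊ := pow_le_pow_left₀ (by norm_num) (by norm_num) _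
    _ = ((2 : ℝ) ^ (⌈Real.logb 2 x⌉₊ : ℝ))⁻¹ := by rw [inv_pow, Real.rpow_natCast]
    _ ≤ ((2 : ℝ) ^ Real.logb 2 x)⁻¹ :=
        inv_anti₀ (by positivity) (Real.rpow_le_rpow_of_exponent_le one_le_two (Nat.le_ceil _))
    _ = x⁻¹ := by rw [Real.rpow_logb two_pos (by norm_num) hx]

theorem mul_le_of_ge_mul_logb {t k : ℕ} {ε : ℝ} (ht : 1 ≤ t) (hε : 0 < ε) (hε2 : ε ≤ 1 / 2)
    (hk : (k : ℝ) ≥ 30 * (t / ε) * Real.logb 2 (2 * t / ε)) :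
    4 * ⌈Real.logb 2 (2 * t / ε)⌉₊ * (⌈4 / ε⌉₊ * t) ≤ k := by
  set L := Real.logb 2 (2 * t / ε)
  have ht' : (1 : ℝ) ≤ t := by exact_mod_cast ht
  have hL : 2 ≤ L := by
    rw [show (2 : ℝ) = Real.logb 2 4 by
      rw [show (4 : ℝ) = 2 ^ (2 : ℝ) by norm_num, Real.logb_rpow two_pos (by norm_num)]]
    refine Real.logb_le_logb_of_le one_lt_two (by norm_num) ?_
    rw [le_div_iff₀ hε]
    linarith
  have hj : (⌈L⌉₊ : ℝ) ≤ L + 1 := (Nat.ceil_lt_add_one (by linarith)).le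
  have hr : (⌈4 / ε⌉₊ : ℝ) ≤ 5 / ε := by
    have h1 : 1 ≤ 1 / ε := by rw [le_div_iff₀ hε]; linarith
    calc (⌈4 / ε⌉₊ : ℝ) ≤ 4 / ε + 1 := (Nat.ceil_lt_add_one (by positivity)).le
      _ ≤ 4 / ε + 1 / ε := by linarith
      _ = 5 / ε := by ring
  have : (4 * ⌈L⌉₊ * (⌈4 / ε⌉₊ * t) : ℝ) ≤ k :=
    calc (4 * ⌈L⌉₊ * (⌈4 / ε⌉₊ * t) : ℝ) ≤ (6 * L) * (5 / ε * t) :=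
          mul_le_mul (by linarith) (by gcongr) (by positivity) (by positivity)
      _ = 30 * (t / ε) * L := by ring
      _ ≤ k := hk
  exact_mod_cast this

theorem one_sub_mul_le_measureReal_setOf_inflB_ge {n : ℕ} (μ : Measure (Fin n → Bool))
    [IsProbabilityMeasure μ] (f : (Fin n → Bool) → Bool) (b : Bool) {t k : ℕ} {ε δ : ℝ}
    (hε : 0 ≤ ε)
    (h : ∀ ℓ ≤ t, (boost μ k).real {z | ENNReal.ofReal ε ≤ boost μ ℓ (forcedSet f (!b) z)} ≤ δ) :
    1 - t * δ ≤
      (boost μ k).real {x | ∀ ℓ : ℕ, 1 ≤ ℓ → ℓ ≤ t → inflB μ f (supp x) b ℓ ≥ 1 - ε} := by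
  set good := {x | ∀ ℓ : ℕ, 1 ≤ ℓ → ℓ ≤ t → inflB μ f (supp x) b ℓ ≥ 1 - ε}
  set Q := fun ℓ => {z | ENNReal.ofReal ε ≤ boost μ ℓ (forcedSet f (!b) z)}
  have hcover : goodᶜ ⊆ ⋃ ℓ ∈ Finset.Icc 1 t, Q ℓ := by
    intro z hz
    obtain ⟨ℓ, h1, h2, hlt⟩ : ∃ ℓ, 1 ≤ ℓ ∧ ℓ ≤ t ∧ inflB μ f (supp z) b ℓ < 1 - ε := by
      by_contra! h
      exact hz fun ℓ h1 h2 => h ℓ h1 h2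
    refine Set.mem_biUnion (Finset.mem_Icc.2 ⟨h1, h2⟩) ?_
    by_contra hQ
    rw [inflB, infl_supp_eq_one_sub, measureReal_def] at hlt
    linarith [ENNReal.toReal_le_of_le_ofReal hε (not_le.1 hQ).le]
  calc 1 - t * δ = 1 - ∑ ℓ ∈ Finset.Icc 1 t, δ := by simp
    _ ≤ 1 - (boost μ k).real goodᶜ := by
        gcongr
        calc (boost μ k).real goodᶜ ≤ (boost μ k).real (⋃ ℓ ∈ Finset.Icc 1 t, Q ℓ) :=
              measureReal_mono hcover (measure_ne_top _ _)
          _ ≤ ∑ ℓ ∈ Finset.Icc 1 t, (boost μ k).real (Q ℓ) := measureReal_biUnion_finset_le _ _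
          _ ≤ ∑ ℓ ∈ Finset.Icc 1 t, δ :=
              Finset.sum_le_sum fun ℓ hℓ => h ℓ (Finset.mem_Icc.1 hℓ).2
    _ = (boost μ k).real good := by rw [probReal_compl_eq_one_sub .of_discrete]; ring

/-- for any Boolean `f` and `k ≳ (t/ε)·log(2t/ε)`, there is `b ∈ {0,1}` such that
with probability `≥ 1 - ε` a random coalition `S ∼ μ^(k)` has `I_S^{b,ℓ}(f) ≥ 1 - ε` for all
`1 ≤ ℓ ≤ t`. -/
theorem boolean_boosted_influence :
    ∃ C : ℝ, C > 0 ∧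
      ∀ n : ℕ, ∀ μ : Measure (Fin n → Bool), IsProbabilityMeasure μ →
      ∀ f : (Fin n → Bool) → Bool,
      ∀ t : ℕ, 1 ≤ t →
      ∀ ε : ℝ, 0 < ε → ε ≤ 1/2 →
      ∀ k : ℕ, (k : ℝ) ≥ C * ((t : ℝ)/ε) * Real.logb 2 (2*t/ε) →
      ∃ b : Bool,
        ((boost μ k) {x | ∀ ℓ : ℕ, 1 ≤ ℓ → ℓ ≤ t → inflB μ f (supp x) b ℓ ≥ 1 - ε}).toReal
          ≥ 1 - ε := by
  refine ⟨30, by norm_num, fun n μ hμ f t ht ε hε hε2 k hk => ?_⟩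
  have ht' : (0 : ℝ) < t := by exact_mod_cast ht
  obtain ⟨b, hb⟩ := exists_forall_boost_setOf_le μ f
    (ofReal_four_fifths_le_one_sub_pow_ceil hε (by linarith)) t
  refine ⟨b, le_trans (le_of_eq ?_)
    (one_sub_mul_le_measureReal_setOf_inflB_ge μ f b (δ := ε / t) hε.le fun ℓ hℓ => ?_)⟩
  · field_simp
  · set j := 4 * ⌈Real.logb 2 (2 * t / ε)⌉₊
    calc _ ≤ (boost μ (⌈4 / ε⌉₊ * t)).real _ ^ j :=
          measureReal_boost_le_pow_of_isLowerSet (isLowerSet_setOf_le_measure_forcedSet _ f _ _)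
            (mul_le_of_ge_mul_logb ht hε hε2 hk)
      _ ≤ (3 / 4) ^ j := by
          gcongr
          exact ENNReal.toReal_le_of_le_ofReal (by norm_num) (hb ℓ hℓ)
      _ ≤ (2 * t / ε)⁻¹ := three_quarters_pow_le_inv (by positivity)
      _ ≤ ε / t := by rw [inv_div]; gcongr; linarith
end
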